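/- Let A be a prime nontrivial associative superalgebra over a commutative unital ring Φ with 1/2 ∈ Φ, and let L be a Lie ideal of A. If there exists a nonzero graded ideal I of A with [I, L] = 0, then L ⊆ Z. -/

import Mathlib

/-! Basic notions for associative superalgebras (ℤ/2-graded algebras). -/

variable {Φ A : Type*} [CommRing Φ] [Ring A] [Algebra Φ A]
variable (𝒜 : ZMod 2 → Submodule Φ A) [GradedAlgebra 𝒜]

/-- The superbracket of elements of degrees `i` and `j`:
`[a,b] = a*b - (-1)^(|a||b|) b*a`. -/
def sbrak (i j : ZMod 2) (a b : A) : A :=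
  a * b - ((-1 : ℤ) ^ (i.val * j.val)) • (b * a)

/-- The bilinear extension of the superbracket to all of `A`, via the
homogeneous components. -/
def superComm (x y : A) : A :=
  ∑ i : ZMod 2, ∑ j : ZMod 2,
    sbrak i j (DirectSum.decompose 𝒜 x i : A) (DirectSum.decompose 𝒜 y j : A)

/-- A graded submodule: one containing all homogeneous components of its
elements. -/
def IsGradedSub (M : Submodule Φ A) : Prop :=
  ∀ (i : ZMod 2), ∀ x ∈ M, (DirectSum.decompose 𝒜 x i : A) ∈ M

/-- A graded two-sided ideal of the superalgebra `A`. -/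
def IsGradedIdeal (I : Submodule Φ A) : Prop :=
  IsGradedSub 𝒜 I ∧ ∀ (a : A), ∀ x ∈ I, a * x ∈ I ∧ x * a ∈ I

/-- `A` is a prime superalgebra: for graded ideals `I, J`, `IJ = 0` implies
`I = 0` or `J = 0`. -/
def SuperPrime : Prop :=
  ∀ I J : Submodule Φ A, IsGradedIdeal 𝒜 I → IsGradedIdeal 𝒜 J →
    (∀ x ∈ I, ∀ y ∈ J, x * y = 0) → I = ⊥ ∨ J = ⊥

/-- `A` is a semiprime superalgebra: for graded ideals `I`, `I² = 0` implies
`I = 0`. -/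
def SuperSemiprime : Prop :=
  ∀ I : Submodule Φ A, IsGradedIdeal 𝒜 I →
    (∀ x ∈ I, ∀ y ∈ I, x * y = 0) → I = ⊥

/-- `A` is a nontrivial superalgebra: its odd part is nonzero. -/
def SuperNontrivial : Prop := 𝒜 1 ≠ ⊥

/-- `Z`: the even part of the center of `A`. -/
def evenCenter : Set A := {z | z ∈ 𝒜 0 ∧ ∀ a : A, a * z = z * a}

/-- A Lie ideal of `A`: a graded submodule `L` with `[L, A] ⊆ L`
(superbracket). -/
def IsSuperLieIdeal (L : Submodule Φ A) : Prop :=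
  IsGradedSub 𝒜 L ∧ ∀ l ∈ L, ∀ a : A, superComm 𝒜 l a ∈ L

/-- A graded subalgebra of `A`: a graded submodule closed under
multiplication. -/
def IsGradedSubalg (W : Submodule Φ A) : Prop :=
  IsGradedSub 𝒜 W ∧ ∀ x ∈ W, ∀ y ∈ W, x * y ∈ W

/-- A submodule `M` is dense in `A` if the (non-unital) subalgebra generated
by `M` contains a nonzero graded ideal of `A`. -/
def SuperDense (M : Submodule Φ A) : Prop :=
  ∃ I : Submodule Φ A, IsGradedIdeal 𝒜 I ∧ I ≠ ⊥ ∧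
    ∀ x ∈ I, x ∈ NonUnitalAlgebra.adjoin Φ (M : Set A)

/-- Witness that `A` is a central order in the Clifford superalgebra of a
nondegenerate quadratic space of dimension `n` over the field `Z⁻¹Z`:
an embedding `f` of `A` into such a Clifford superalgebra, preserving the
grading, inverting the nonzero elements of `Z`, and such that every element of
the Clifford superalgebra (resp. of its base field) is a fraction of elements
of `A` (resp. of `Z`) over `Z`. -/
structure CentralOrderInCliffWitness (n : ℕ) : Type _ where
  K : Type
  [fieldK : Field K]
  V : Type
  [acgV : AddCommGroup V]
  [modV : Module K V]
  Q : QuadraticForm K V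
  dim : Module.finrank K V = n
  nondeg : LinearMap.BilinForm.Nondegenerate (QuadraticMap.polarBilin Q)
  f : A →+* CliffordAlgebra Q
  inj : Function.Injective f
  graded : ∀ i : ZMod 2, ∀ x ∈ 𝒜 i, f x ∈ CliffordAlgebra.evenOdd Q i
  unitZ : ∀ z ∈ evenCenter 𝒜, z ≠ 0 → IsUnit (f z)
  centralZ : ∀ z ∈ evenCenter 𝒜, ∀ c : CliffordAlgebra Q, c * f z = f z * c
  fracSurj : ∀ (i : ZMod 2), ∀ c ∈ CliffordAlgebra.evenOdd Q i,
    ∃ z ∈ evenCenter 𝒜, z ≠ 0 ∧ ∃ a ∈ 𝒜 i, f z * c = f a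
  baseField : ∀ k : K, ∃ z ∈ evenCenter 𝒜, z ≠ 0 ∧ ∃ w ∈ evenCenter 𝒜,
    algebraMap K (CliffordAlgebra Q) k * f z = f w

/-- `A` is a central order in `C(n)`. -/
def IsCentralOrderInCliff (n : ℕ) : Prop :=
  (∃ z ∈ evenCenter 𝒜, z ≠ 0) ∧ Nonempty (CentralOrderInCliffWitness 𝒜 n)

/-! For homogeneous `a` and `m ∈ L`, the super Leibniz rule `[x a, m] = x [a, m] ± [x, m] a`
shows that `I` annihilates `[a, m]` from the left, hence annihilates the graded ideal it
generates; primeness makes `[a, m] = 0`. So the even part of an element of `L` is central, and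
its odd part `m` anticommutes with itself: `m² = 0` because `2` is invertible, hence `m A m = 0`
and semiprimeness gives `m = 0`. -/

open DirectSum

section

variable {𝒜}

lemma decompose_zero_add_decompose_one (x : A) :
    (decompose 𝒜 x 0 : A) + decompose 𝒜 x 1 = x := by
  classical
  conv_rhs => rw [← sum_support_decompose 𝒜 x]
  rw [Finset.sum_subset (Finset.subset_univ _) fun i _ hi => by
    simp [DFinsupp.notMem_support_iff.mp hi]]
  exact (Fin.sum_univ_two (fun i : ZMod 2 => (decompose 𝒜 x i : A))).symm

lemma forall_of_forall_homogeneous {p : A → Prop} (hadd : ∀ x y, p x → p y → p (x + y))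
    (hhom : ∀ i, ∀ x ∈ 𝒜 i, p x) (x : A) : p x :=
  Decomposition.inductionOn 𝒜 (hhom 0 0 (zero_mem _)) (fun y => hhom _ _ y.2) hadd x

lemma decompose_mem_of_mem_graded {M : Submodule Φ A} {y : A} {c : ZMod 2}
    (hy : y ∈ 𝒜 c) (hyM : y ∈ M) (i : ZMod 2) : (decompose 𝒜 y i : A) ∈ M := by
  by_cases hc : c = i
  · subst hc
    rwa [decompose_of_mem_same 𝒜 hy]
  · rw [decompose_of_mem_ne 𝒜 hy hc]
    exact M.zero_mem

lemma superComm_eq_sbrak {i j : ZMod 2} {x y : A} (hx : x ∈ 𝒜 i) (hy : y ∈ 𝒜 j) :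
    superComm 𝒜 x y = sbrak i j x y := by
  have hx' (k : ZMod 2) (hk : k ≠ i) : (decompose 𝒜 x k : A) = 0 :=
    decompose_of_mem_ne 𝒜 hx hk.symm
  have hy' (l : ZMod 2) (hl : l ≠ j) : (decompose 𝒜 y l : A) = 0 :=
    decompose_of_mem_ne 𝒜 hy hl.symm
  rw [superComm, Fintype.sum_eq_single i fun k hk => by simp [sbrak, hx' k hk],
    Fintype.sum_eq_single j fun l hl => by simp [sbrak, hy' l hl],
    decompose_of_mem_same 𝒜 hx, decompose_of_mem_same 𝒜 hy]

lemma sbrak_mem_graded {i j : ZMod 2} {a b : A} (ha : a ∈ 𝒜 i) (hb : b ∈ 𝒜 j) :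
    sbrak i j a b ∈ 𝒜 (i + j) :=
  sub_mem (SetLike.mul_mem_graded ha hb)
    (zsmul_mem (add_comm j i ▸ SetLike.mul_mem_graded hb ha) _)

lemma neg_one_pow_val_add_mul (i j d : ZMod 2) :
    (-1 : ℤ) ^ ((i + j).val * d.val) = (-1) ^ (j.val * d.val) * (-1) ^ (i.val * d.val) := by
  revert i j d
  decide

lemma sbrak_mul_left (i j d : ZMod 2) (u v w : A) :
    sbrak (i + j) d (u * v) w =
      u * sbrak j d v w + (-1 : ℤ) ^ (j.val * d.val) • (sbrak i d u w * v) := by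
  simp only [sbrak, neg_one_pow_val_add_mul, mul_sub, sub_mul, smul_sub, mul_smul_comm,
    smul_mul_assoc, smul_smul, mul_assoc]
  abel

variable (Φ) in
def idealSpan (w : A) : Submodule Φ A :=
  Submodule.span Φ (Set.range fun p : A × A => p.1 * w * p.2)

lemma mul_mul_mem_idealSpan (u w v : A) : u * w * v ∈ idealSpan Φ w :=
  Submodule.subset_span ⟨(u, v), rfl⟩

lemma mem_idealSpan_self (w : A) : w ∈ idealSpan Φ w := by
  simpa using mul_mul_mem_idealSpan (Φ := Φ) 1 w 1

lemma idealSpan_le {w : A} {M : Submodule Φ A} (h : ∀ u v, u * w * v ∈ M) :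
    idealSpan Φ w ≤ M :=
  Submodule.span_le.2 <| Set.range_subset_iff.2 fun p => h p.1 p.2

lemma isGradedSub_span {S : Set A}
    (h : ∀ s ∈ S, ∀ i, (decompose 𝒜 s i : A) ∈ Submodule.span Φ S) :
    IsGradedSub 𝒜 (Submodule.span Φ S) := by
  intro i x hx
  induction hx using Submodule.span_induction with
  | mem s hs => exact h s hs i
  | zero => simp
  | add x y _ _ hx hy =>
    simpa only [decompose_add, DirectSum.add_apply, Submodule.coe_add] using add_mem hx hy
  | smul c x _ hx => simpa only [decompose_smul, DirectSum.smul_apply, Submodule.coe_smul] using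
      Submodule.smul_mem _ c hx

lemma isGradedIdeal_idealSpan {e : ZMod 2} {w : A} (hw : w ∈ 𝒜 e) :
    IsGradedIdeal 𝒜 (idealSpan Φ w) := by
  refine ⟨isGradedSub_span ?_, fun a x hx => ⟨?_, ?_⟩⟩
  · rintro _ ⟨⟨u, v⟩, rfl⟩ i
    have hhom (k : ZMod 2) (u : A) (hu : u ∈ 𝒜 k) (m : ZMod 2) (v : A) (hv : v ∈ 𝒜 m) :
        (decompose 𝒜 (u * w * v) i : A) ∈ idealSpan Φ w :=
      decompose_mem_of_mem_graded (SetLike.mul_mem_graded (SetLike.mul_mem_graded hu hw) hv)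
        (mul_mul_mem_idealSpan u w v) i
    refine forall_of_forall_homogeneous (𝒜 := 𝒜)
      (p := fun u => ∀ v, (decompose 𝒜 (u * w * v) i : A) ∈ idealSpan Φ w)
      (fun x y hx hy v => ?_) (fun k u hu v => ?_) u v
    · simpa [add_mul] using add_mem (hx v) (hy v)
    · exact forall_of_forall_homogeneous (𝒜 := 𝒜)
        (fun x y hx hy => by simpa [mul_add] using add_mem hx hy) (hhom k u hu) v
  · refine idealSpan_le (M := (idealSpan Φ w).comap (LinearMap.mulLeft Φ a)) (fun u v => ?_) hx
    simpa [mul_assoc] using mul_mul_mem_idealSpan (Φ := Φ) (a * u) w v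
  · refine idealSpan_le (M := (idealSpan Φ w).comap (LinearMap.mulRight Φ a)) (fun u v => ?_) hx
    simpa [mul_assoc] using mul_mul_mem_idealSpan (Φ := Φ) u w (v * a)

lemma SuperPrime.superSemiprime (hp : SuperPrime 𝒜) : SuperSemiprime 𝒜 :=
  fun I hI hII => (hp I I hI hI hII).elim id id

lemma SuperPrime.eq_zero_of_forall_mul_eq_zero (hp : SuperPrime 𝒜) {I : Submodule Φ A}
    (hI : IsGradedIdeal 𝒜 I) (hIne : I ≠ ⊥) {e : ZMod 2} {w : A} (hw : w ∈ 𝒜 e)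
    (h : ∀ x ∈ I, x * w = 0) : w = 0 := by
  have hIJ : ∀ x ∈ I, ∀ y ∈ idealSpan Φ w, x * y = 0 := fun x hx =>
    idealSpan_le (M := LinearMap.ker (LinearMap.mulLeft Φ x)) fun u v => by
      simp [← mul_assoc, h _ ((hI.2 u x hx).2)]
  rcases hp I _ hI (isGradedIdeal_idealSpan hw) hIJ with hI0 | hJ0
  · exact absurd hI0 hIne
  · simpa [hJ0] using mem_idealSpan_self (Φ := Φ) w

lemma SuperSemiprime.eq_zero_of_forall_mul_mul_eq_zero (hs : SuperSemiprime 𝒜) {e : ZMod 2}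
    {w : A} (hw : w ∈ 𝒜 e) (h : ∀ b, w * b * w = 0) : w = 0 := by
  have hJJ : ∀ x ∈ idealSpan Φ w, ∀ y ∈ idealSpan Φ w, x * y = 0 := by
    intro x hx
    have hxw (u : A) : x * (u * w) = 0 := by
      refine idealSpan_le (M := LinearMap.ker (LinearMap.mulRight Φ (u * w))) (fun u' v' => ?_) hx
      rw [LinearMap.mem_ker, LinearMap.mulRight_apply,
        show u' * w * v' * (u * w) = u' * (w * (v' * u) * w) by noncomm_ring, h, mul_zero]
    exact idealSpan_le (M := LinearMap.ker (LinearMap.mulLeft Φ x)) fun u v => by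
      simp [← mul_assoc, hxw]
  simpa [hs _ (isGradedIdeal_idealSpan hw) hJJ] using mem_idealSpan_self (Φ := Φ) w

lemma SuperPrime.sbrak_eq_zero_of_sbrak_ideal_eq_zero (hp : SuperPrime 𝒜) {I : Submodule Φ A}
    (hI : IsGradedIdeal 𝒜 I) (hIne : I ≠ ⊥) {d : ZMod 2} {m : A} (hm : m ∈ 𝒜 d)
    (hIm : ∀ i, ∀ x ∈ I, x ∈ 𝒜 i → sbrak i d x m = 0) {j : ZMod 2} {a : A}
    (ha : a ∈ 𝒜 j) : sbrak j d a m = 0 := by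
  have hhom (i : ZMod 2) (x : A) (hxI : x ∈ I) (hxi : x ∈ 𝒜 i) : x * sbrak j d a m = 0 := by
    have h := sbrak_mul_left i j d x a m
    rwa [hIm (i + j) _ (hI.2 a x hxI).2 (SetLike.mul_mem_graded hxi ha), hIm i x hxI hxi,
      zero_mul, smul_zero, add_zero, eq_comm] at h
  refine hp.eq_zero_of_forall_mul_eq_zero hI hIne (sbrak_mem_graded ha hm) fun x hx => ?_
  rw [← decompose_zero_add_decompose_one (𝒜 := 𝒜) x, add_mul,
    hhom 0 _ (hI.1 0 x hx) (SetLike.coe_mem _), hhom 1 _ (hI.1 1 x hx) (SetLike.coe_mem _),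
    add_zero]

lemma mem_evenCenter_of_sbrak_eq_zero {m : A} (hm : m ∈ 𝒜 0)
    (h : ∀ j, ∀ a ∈ 𝒜 j, sbrak j 0 a m = 0) : m ∈ evenCenter 𝒜 :=
  ⟨hm, forall_of_forall_homogeneous (𝒜 := 𝒜) (p := fun a => a * m = m * a)
    (fun x y hx hy => by rw [add_mul, mul_add, hx, hy])
    fun j a ha => sub_eq_zero.1 (by simpa [sbrak] using h j a ha)⟩

lemma SuperSemiprime.eq_zero_of_sbrak_eq_zero (hs : SuperSemiprime 𝒜) (h2 : IsUnit (2 : Φ))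
    {m : A} (hm : m ∈ 𝒜 1) (h : ∀ j, ∀ a ∈ 𝒜 j, sbrak j 1 a m = 0) : m = 0 := by
  have hcomm (j : ZMod 2) (a : A) (ha : a ∈ 𝒜 j) : a * m = (-1 : ℤ) ^ j.val • (m * a) := by
    simpa [sbrak, sub_eq_zero, ZMod.val_one] using h j a ha
  have hsq : m * m = 0 := by
    have h := hcomm 1 m hm
    rw [ZMod.val_one, pow_one, neg_one_smul, eq_neg_iff_add_eq_zero, ← two_smul Φ] at h
    exact h2.smul_eq_zero.1 h
  refine hs.eq_zero_of_forall_mul_mul_eq_zero hm fun b => ?_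
  refine forall_of_forall_homogeneous (𝒜 := 𝒜) (p := fun b => m * b * m = 0)
    (fun x y hx hy => by rw [mul_add, add_mul, hx, hy, add_zero]) (fun j a ha => ?_) b
  rw [mul_assoc, hcomm j a ha, mul_smul_comm, ← mul_assoc, hsq, zero_mul, smul_zero]

end

theorem lieIdeal_central_of_ideal_brackets_zero
    (h2 : IsUnit (2 : Φ)) (hp : SuperPrime 𝒜)
    (L : Submodule Φ A) (hL : IsSuperLieIdeal 𝒜 L)
    (I : Submodule Φ A) (hI : IsGradedIdeal 𝒜 I) (hIne : I ≠ ⊥)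
    (hIL : ∀ x ∈ I, ∀ l ∈ L, superComm 𝒜 x l = 0) :
    (L : Set A) ⊆ evenCenter 𝒜 := by
  intro l hl
  have hsuper (d j : ZMod 2) (a : A) (ha : a ∈ 𝒜 j) : sbrak j d a (decompose 𝒜 l d) = 0 :=
    hp.sbrak_eq_zero_of_sbrak_ideal_eq_zero hI hIne (SetLike.coe_mem _)
      (fun i x hx hxi => superComm_eq_sbrak hxi (SetLike.coe_mem _) ▸ hIL x hx _ (hL.1 d l hl)) ha
  have hl1 : (decompose 𝒜 l 1 : A) = 0 :=
    hp.superSemiprime.eq_zero_of_sbrak_eq_zero h2 (SetLike.coe_mem _) (hsuper 1)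
  rw [← decompose_zero_add_decompose_one (𝒜 := 𝒜) l, hl1, add_zero]
  exact mem_evenCenter_of_sbrak_eq_zero (SetLike.coe_mem _) (hsuper 0)
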